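/- If Γ is a finite group acting freely by measure-preserving Borel automorphisms on a standard probability space X, then the orbit equivalence relation R(Γ) admits a generating graphing of cost 1 − 1/|Γ|; in particular C(R(Γ)) ≤ 1 − 1/|Γ|. -/

import Mathlib

open MeasureTheory

/-- The cost of an equivalence relation `R`: the infimum of the costs of (countable)
simple graphings generating `R`. -/
noncomputable def eqRelCost {X : Type*} [MeasurableSpace X] (μ : Measure X)
    (R : X → X → Prop) : ENNReal :=
  sInf {c | ∃ (S : ℕ → Set X) (f : ℕ → X → X), (∀ n, MeasurableSet (S n)) ∧
    (∀ x y, R x y ↔ Relation.EqvGen (fun a b => ∃ n, a ∈ S n ∧ f n a = b) x y) ∧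
    c = ∑' n, μ (S n)}

/-- (Levitt) If a finite group `Γ` acts freely by measure-preserving Borel automorphisms
on a standard Borel probability space `X`, then the orbit equivalence relation `R(Γ)`
admits a generating graphing of cost `1 - 1/|Γ|`; in particular
`C(R(Γ)) ≤ 1 - 1/|Γ|`. -/
theorem levitt_finite_group_cost {X : Type*} [MeasurableSpace X] [StandardBorelSpace X]
    (μ : Measure X) [IsProbabilityMeasure μ]
    (Γ : Type*) [Group Γ] [Finite Γ] [MulAction Γ X]
    (hmp : ∀ g : Γ, MeasurePreserving (fun x : X => g • x) μ μ)
    (hfree : ∀ g : Γ, g ≠ 1 → μ {x : X | g • x = x} = 0) :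
    (∃ (S : ℕ → Set X) (f : ℕ → X → X), (∀ n, MeasurableSet (S n)) ∧
      (∀ x y : X, (∃ g : Γ, g • x = y) ↔
        Relation.EqvGen (fun a b => ∃ n, a ∈ S n ∧ f n a = b) x y) ∧
      ∑' n, μ (S n) = 1 - 1 / (Nat.card Γ : ENNReal)) ∧
    eqRelCost μ (fun x y : X => ∃ g : Γ, g • x = y) ≤ 1 - 1 / (Nat.card Γ : ENNReal) := by
  classical
  haveI : Fintype Γ := Fintype.ofFinite Γ
  obtain ⟨e, he⟩ := exists_measurableEmbedding_real X
  set n := Nat.card Γ with hn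
  have hncard : n = Fintype.card Γ := Nat.card_eq_fintype_card
  have hnpos : 0 < n := Nat.card_pos
  have hn0 : (n : ENNReal) ≠ 0 := Nat.cast_ne_zero.mpr hnpos.ne'
  have hntop : (n : ENNReal) ≠ ⊤ := ENNReal.natCast_ne_top n
  -- the transversal
  set D : Set X := {x | ∀ g : Γ, e x ≤ e (g • x)} with hDdef
  have hDmeas : MeasurableSet D := by
    have : D = ⋂ g : Γ, {x | e x ≤ e (g • x)} := by
      ext x; simp [hDdef]
    rw [this]
    exact MeasurableSet.iInter fun g =>
      measurableSet_le he.measurable (he.measurable.comp (hmp g).measurable)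
  -- uniqueness of the transversal point in each orbit
  have hUniq : ∀ a ∈ D, ∀ b ∈ D, (∃ g : Γ, g • a = b) → a = b := by
    rintro a ha b hb ⟨g, rfl⟩
    refine he.injective (le_antisymm (ha g) ?_)
    have := hb g⁻¹
    rwa [inv_smul_smul] at this
  -- every orbit meets D
  have hCover : ∀ x : X, ∃ g : Γ, g • x ∈ D := by
    intro x
    obtain ⟨g₀, -, hg₀⟩ := Finset.exists_min_image Finset.univ (fun g : Γ => e (g • x))
      ⟨1, Finset.mem_univ 1⟩
    refine ⟨g₀, fun h => ?_⟩
    have := hg₀ (h * g₀) (Finset.mem_univ _)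
    simpa [mul_smul] using this
  -- measure of D
  have hμT : ∀ g : Γ, μ ((fun x : X => g • x) ⁻¹' D) = μ D := fun g =>
    (hmp g).measure_preimage hDmeas.nullMeasurableSet
  have hμD : μ D = 1 / (n : ENNReal) := by
    have hunion : (⋃ g : Γ, (fun x : X => g • x) ⁻¹' D) = Set.univ := by
      refine Set.eq_univ_iff_forall.mpr fun x => ?_
      obtain ⟨g, hg⟩ := hCover x
      exact Set.mem_iUnion.mpr ⟨g, hg⟩
    have hdisj : Pairwise (Function.onFun (AEDisjoint μ) fun g : Γ => (fun x : X => g • x) ⁻¹' D) := by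
      intro g h hgh
      have hsub : ((fun x : X => g • x) ⁻¹' D) ∩ ((fun x : X => h • x) ⁻¹' D) ⊆
          {x : X | (g⁻¹ * h) • x = x} := by
        rintro x ⟨hxg, hxh⟩
        have hgh' : g • x = h • x :=
          hUniq _ hxg _ hxh ⟨h * g⁻¹, by rw [mul_smul, inv_smul_smul]⟩
        simp only [Set.mem_setOf_eq, mul_smul]
        rw [← hgh', inv_smul_smul]
      exact measure_mono_null hsub
        (hfree _ fun hc => hgh (inv_mul_eq_one.mp hc))
    have hsum : μ (⋃ g : Γ, (fun x : X => g • x) ⁻¹' D)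
        = ∑' g : Γ, μ ((fun x : X => g • x) ⁻¹' D) :=
      measure_iUnion₀ hdisj fun g => ((hmp g).measurable hDmeas).nullMeasurableSet
    rw [hunion, measure_univ] at hsum
    have : (1 : ENNReal) = (n : ENNReal) * μ D := by
      rw [hsum, tsum_fintype]
      simp only [hμT]
      rw [Finset.sum_const, Finset.card_univ, ← hncard, nsmul_eq_mul]
    rw [one_div, ← one_mul (μ D), ← ENNReal.inv_mul_cancel hn0 hntop, mul_assoc, ← this, mul_one]
  -- the graphing
  set k := Fintype.card {g : Γ // g ≠ 1} with hkdef
  have hk : k = n - 1 := by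
    rw [hkdef, hncard]
    have : Fintype.card {g : Γ // g ≠ 1} = Fintype.card Γ - Fintype.card {g : Γ // g = 1} :=
      Fintype.card_subtype_compl _
    rw [this, Fintype.card_subtype_eq (1 : Γ)]
  set eqv : Fin k ≃ {g : Γ // g ≠ 1} := (Fintype.equivFin _).symm with heqv
  set S : ℕ → Set X := fun i => if i < k then D else ∅ with hSdef
  set f : ℕ → X → X := fun i x =>
    if h : i < k then ((eqv ⟨i, h⟩ : {g : Γ // g ≠ 1}) : Γ) • x else x with hfdef
  have hSmeas : ∀ i, MeasurableSet (S i) := by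
    intro i
    by_cases h : i < k <;> simp [hSdef, h, hDmeas]
  -- edges
  have hstep : ∀ d ∈ D, ∀ g : Γ, g ≠ 1 →
      ∃ i, d ∈ S i ∧ f i d = g • d := by
    intro d hd g hg
    refine ⟨(eqv.symm ⟨g, hg⟩ : Fin k).val, ?_, ?_⟩
    · simp [hSdef, (eqv.symm ⟨g, hg⟩ : Fin k).isLt, hd]
    · rw [hfdef]
      simp only [(eqv.symm ⟨g, hg⟩ : Fin k).isLt, dif_pos, Fin.eta, Equiv.apply_symm_apply]
  have hconn : ∀ d ∈ D, ∀ g : Γ,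
      Relation.EqvGen (fun a b => ∃ i, a ∈ S i ∧ f i a = b) d (g • d) := by
    intro d hd g
    by_cases hg : g = 1
    · rw [hg, one_smul]; exact Relation.EqvGen.refl d
    · exact Relation.EqvGen.rel _ _ (hstep d hd g hg)
  -- generation
  have hgen : ∀ x y : X, (∃ g : Γ, g • x = y) ↔
      Relation.EqvGen (fun a b => ∃ i, a ∈ S i ∧ f i a = b) x y := by
    intro x y
    constructor
    · rintro ⟨g, rfl⟩
      obtain ⟨g₀, hg₀⟩ := hCover x
      have h1 : Relation.EqvGen (fun a b => ∃ i, a ∈ S i ∧ f i a = b) (g₀ • x) x := by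
        have := hconn _ hg₀ g₀⁻¹
        rwa [inv_smul_smul] at this
      have h2 : Relation.EqvGen (fun a b => ∃ i, a ∈ S i ∧ f i a = b) (g₀ • x) (g • x) := by
        have := hconn _ hg₀ (g * g₀⁻¹)
        rwa [mul_smul, inv_smul_smul] at this
      exact Relation.EqvGen.trans _ _ _ (Relation.EqvGen.symm _ _ h1) h2
    · intro h
      induction h with
      | rel a b hab =>
        obtain ⟨i, hai, hfi⟩ := hab
        by_cases hik : i < k
        · refine ⟨(eqv ⟨i, hik⟩ : {g : Γ // g ≠ 1}) , ?_⟩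
          rw [← hfi, hfdef]
          simp [hik]
        · exfalso
          simp [hSdef, hik] at hai
      | refl a => exact ⟨1, one_smul _ _⟩
      | symm a b _ ih =>
        obtain ⟨g, rfl⟩ := ih
        exact ⟨g⁻¹, inv_smul_smul g a⟩
      | trans a b c _ _ ih₁ ih₂ =>
        obtain ⟨g, rfl⟩ := ih₁
        obtain ⟨g', rfl⟩ := ih₂
        exact ⟨g' * g, mul_smul g' g a⟩
  -- cost
  have hcost : ∑' i, μ (S i) = 1 - 1 / (n : ENNReal) := by
    have hzero : ∀ i ∉ Finset.range k, μ (S i) = 0 := by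
      intro i hi
      rw [Finset.mem_range, not_lt] at hi
      simp [hSdef, Nat.not_lt.mpr hi]
    rw [tsum_eq_sum hzero]
    have : ∀ i ∈ Finset.range k, μ (S i) = 1 / (n : ENNReal) := by
      intro i hi
      rw [Finset.mem_range] at hi
      simp [hSdef, hi, hμD]
    rw [Finset.sum_congr rfl this, Finset.sum_const, Finset.card_range, nsmul_eq_mul]
    have hadd : (k : ENNReal) * (1 / (n : ENNReal)) + 1 / (n : ENNReal) = 1 := by
      rw [hk, one_div, ← add_one_mul]
      have hcast : ((n - 1 : ℕ) : ENNReal) + 1 = (n : ENNReal) := by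
        norm_cast
        omega
      rw [hcast, ENNReal.mul_inv_cancel hn0 hntop]
    exact (ENNReal.eq_sub_of_add_eq
      (by rw [one_div]; exact ENNReal.inv_ne_top.mpr hn0) hadd)
  exact ⟨⟨S, f, hSmeas, hgen, hcost⟩,
    sInf_le ⟨S, f, hSmeas, hgen, hcost.symm⟩⟩
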